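/- Let (x_n) be a computable sequence of real numbers that converges to y : ℝ computably, i.e., there is a computable N : ℕ → ℕ such that for all k and all n ≥ N k, |x_n − y| ≤ (2:ℝ)⁻¹ ^ k. Then y is a computable real number (Turing: the limit of a computably convergent sequence is computable). -/
import Mathlib


/-- A real number `x` is computable if some computable `g : ℕ → ℚ` satisfies
`|x - g n| ≤ 2⁻¹ ^ n` for all `n`. -/
def ComputableReal (x : ℝ) : Prop :=
  ∃ g : ℕ → ℚ, Computable g ∧ ∀ n : ℕ, |x - (g n : ℝ)| ≤ (2:ℝ)⁻¹ ^ n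

/-- `x : ℕ → ℝ` is a computable sequence of reals. -/
def ComputableSeqReal (x : ℕ → ℝ) : Prop :=
  ∃ f : ℕ → ℕ → ℚ, Computable₂ f ∧ ∀ n m : ℕ, |x n - (f n m : ℝ)| ≤ (2:ℝ)⁻¹ ^ m

/-- Turing: the limit of a computably convergent computable sequence of reals
is a computable real. -/
theorem limit_computable_of_computable_convergence
    (x : ℕ → ℝ) (hx : ComputableSeqReal x) (y : ℝ) (N : ℕ → ℕ) (hN : Computable N)
    (hconv : ∀ k n : ℕ, N k ≤ n → |x n - y| ≤ (2:ℝ)⁻¹ ^ k) :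
    ComputableReal y := by
  obtain ⟨f, hf, hfa⟩ := hx
  refine ⟨fun k => f (N (k + 1)) (k + 1), ?_, ?_⟩
  · exact hf.comp (hN.comp (Computable.succ)) Computable.succ
  · intro k
    have h1 := hconv (k + 1) (N (k + 1)) le_rfl
    have h2 := hfa (N (k + 1)) (k + 1)
    have : |y - (f (N (k + 1)) (k + 1) : ℝ)| ≤ (2:ℝ)⁻¹ ^ (k+1) + (2:ℝ)⁻¹ ^ (k+1) := by
      calc |y - (f (N (k + 1)) (k + 1) : ℝ)|
          ≤ |y - x (N (k+1))| + |x (N (k+1)) - (f (N (k + 1)) (k + 1) : ℝ)| := by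
            have := abs_sub_le y (x (N (k+1))) ((f (N (k + 1)) (k + 1) : ℝ)); linarith
        _ ≤ (2:ℝ)⁻¹ ^ (k+1) + (2:ℝ)⁻¹ ^ (k+1) := by
            rw [abs_sub_comm] at h1; linarith
    calc |y - (f (N (k + 1)) (k + 1) : ℝ)| ≤ (2:ℝ)⁻¹ ^ (k+1) + (2:ℝ)⁻¹ ^ (k+1) := this
      _ = (2:ℝ)⁻¹ ^ k := by ring
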